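/- Let R be a ring, n ≥ 1 an integer, and 𝒳 a class of left R-modules. If {G_i}_{i∈J} is a family of Gorenstein n-𝒳-flat right R-modules, then the direct sum ⊕_{i∈J} G_i is a Gorenstein n-𝒳-flat right R-module. -/

import Mathlib

/- Common framework: `n`-presented modules, syzygies, special 𝒳-presented modules,
   Ext/Tor vanishing (Tor via a hand-rolled tensor product over a possibly
   noncommutative ring, since Mathlib's tensor product requires commutativity),
   `n`-𝒳-injective / `n`-𝒳-flat modules, and the Gorenstein versions. -/

universe u
open CategoryTheory LinearMap DirectSum

section Basic

variable (R : Type u) [Ring R]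

/-- `U` is an `n`-presented left `R`-module: there is an exact sequence
`F_n → ⋯ → F_0 → U → 0` with each `F_i` finitely generated free. -/
def IsNPresented : ℕ → ModuleCat.{u} R → Prop
  | 0, U => Module.Finite R U
  | n + 1, U => ∃ (F : ModuleCat.{u} R) (f : F →ₗ[R] U),
      Module.Free R F ∧ Module.Finite R F ∧ Function.Surjective f ∧
      IsNPresented n (ModuleCat.of R (LinearMap.ker f))

/-- `K` is a `j`-th syzygy of `U` computed from finitely generated free modules:
`IsSyzygy 0 U K` iff `K ≅ U`, and a `(j+1)`-st syzygy of `U` is a `j`-th syzygy of the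
kernel of a surjection from a finitely generated free module onto `U`. -/
def IsSyzygy : ℕ → ModuleCat.{u} R → ModuleCat.{u} R → Prop
  | 0, U, K => Nonempty (K ≃ₗ[R] U)
  | j + 1, U, K => ∃ (F : ModuleCat.{u} R) (f : F →ₗ[R] U),
      Module.Free R F ∧ Module.Finite R F ∧ Function.Surjective f ∧
      IsSyzygy j (ModuleCat.of R (LinearMap.ker f)) K

/-- `Ext_R^k(U, M) = 0`. -/
noncomputable def ExtVanishes (k : ℕ) (U M : ModuleCat.{u} R) : Prop :=
  Subsingleton (((Ext ℤ (ModuleCat.{u} R) k).obj (Opposite.op U)).obj M)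

variable (𝒳 : Set (ModuleCat.{u} R)) (n : ℕ)

/-- `K` is a special 𝒳-presented module: `K` is the image `K_{n-1} = Im(F_{n-1} → F_{n-2})`
arising from an `n`-presentation of some `U ∈ 𝒳` (with the convention `K = U` when `n = 1`),
i.e. `K` is an `(n-1)`-st syzygy of some `n`-presented `U ∈ 𝒳`. -/
def IsSpecialPresented (K : ModuleCat.{u} R) : Prop :=
  ∃ U ∈ 𝒳, IsNPresented R n U ∧ IsSyzygy R (n - 1) U K

/-- `M` is an `n`-𝒳-injective left `R`-module: `Ext_R^n(U, M) = 0` for every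
`n`-presented `U ∈ 𝒳`. -/
noncomputable def IsNXInjective (M : ModuleCat.{u} R) : Prop :=
  ∀ U ∈ 𝒳, IsNPresented R n U → ExtVanishes R n U M

/-- Projective dimension at most `m`. -/
def ProjDimLE : ℕ → ModuleCat.{u} R → Prop
  | 0, K => Module.Projective R K
  | m + 1, K => ∃ (P : ModuleCat.{u} R) (f : P →ₗ[R] K),
      Module.Projective R P ∧ Function.Surjective f ∧
      ProjDimLE m (ModuleCat.of R (LinearMap.ker f))

/-- Finite projective dimension. -/
def HasFiniteProjDim (K : ModuleCat.{u} R) : Prop := ∃ m, ProjDimLE R m K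

/-- `R` is left `n`-𝒳-coherent: every `n`-presented module in `𝒳` is `(n+1)`-presented. -/
def IsNXCoherent : Prop := ∀ U ∈ 𝒳, IsNPresented R n U → IsNPresented R (n + 1) U

/-- `M` has `n`-𝒳-injective dimension at most `m`:
`Ext_R^{n+i}(U, M) = 0` for all `i ≥ m + 1` and all `n`-presented `U ∈ 𝒳`. -/
noncomputable def NXInjDimLE (m : ℕ) (M : ModuleCat.{u} R) : Prop :=
  ∀ U ∈ 𝒳, IsNPresented R n U → ∀ i : ℕ, m + 1 ≤ i → ExtVanishes R (n + i) U M

/-- `M` has finite `n`-𝒳-injective dimension. -/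
noncomputable def HasFiniteNXInjDim (M : ModuleCat.{u} R) : Prop := ∃ m, NXInjDimLE R 𝒳 n m M

end Basic

section Tensor

variable (R : Type u) [Ring R]

/-- The defining relations of the tensor product `N ⊗_R U` of a right `R`-module `N`
with a left `R`-module `U`, inside `N ⊗_ℤ U`. -/
def tensorRel (N : Type u) [AddCommGroup N] [Module Rᵐᵒᵖ N]
    (U : Type u) [AddCommGroup U] [Module R U] : Submodule ℤ (TensorProduct ℤ N U) :=
  Submodule.span ℤ {x | ∃ (r : R) (a : N) (v : U),
    x = (MulOpposite.op r • a) ⊗ₜ[ℤ] v - a ⊗ₜ[ℤ] (r • v)}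

/-- The tensor product `N ⊗_R U` of a right `R`-module `N` with a left `R`-module `U`
over a (possibly noncommutative) ring `R`, as an abelian group. -/
abbrev RTensor (N : Type u) [AddCommGroup N] [Module Rᵐᵒᵖ N]
    (U : Type u) [AddCommGroup U] [Module R U] : Type u :=
  TensorProduct ℤ N U ⧸ tensorRel R N U

/-- Functoriality of `RTensor` in both variables. -/
noncomputable def rtmap {N N' : Type u} [AddCommGroup N] [Module Rᵐᵒᵖ N]
    [AddCommGroup N'] [Module Rᵐᵒᵖ N']
    {U U' : Type u} [AddCommGroup U] [Module R U] [AddCommGroup U'] [Module R U']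
    (g : N →ₗ[Rᵐᵒᵖ] N') (f : U →ₗ[R] U') :
    RTensor R N U →ₗ[ℤ] RTensor R N' U' :=
  Submodule.mapQ (tensorRel R N U) (tensorRel R N' U')
    (TensorProduct.map g.toAddMonoidHom.toIntLinearMap f.toAddMonoidHom.toIntLinearMap)
    (by
      rw [tensorRel, Submodule.span_le]
      rintro x ⟨r, a, v, rfl⟩
      erw [SetLike.mem_coe, Submodule.mem_comap]
      erw [map_sub, TensorProduct.map_tmul, TensorProduct.map_tmul]
      apply Submodule.subset_span
      exact ⟨r, g a, f v, by simp [map_smul]⟩)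

/-- A left `R`-module `M` is flat if `- ⊗_R M` preserves injections of right `R`-modules. -/
noncomputable def IsFlatModule (M : ModuleCat.{u} R) : Prop :=
  ∀ (A B : ModuleCat.{u} Rᵐᵒᵖ) (i : A →ₗ[Rᵐᵒᵖ] B), Function.Injective i →
    Function.Injective (rtmap R i (LinearMap.id (M := M)))

/-- A right `R`-module `N` is flat if `N ⊗_R -` preserves injections of left `R`-modules. -/
noncomputable def IsFlatRight (N : ModuleCat.{u} Rᵐᵒᵖ) : Prop :=
  ∀ (A B : ModuleCat.{u} R) (i : A →ₗ[R] B), Function.Injective i →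
    Function.Injective (rtmap R (LinearMap.id (M := N)) i)

/-- Flat dimension of a left `R`-module at most `m`. -/
noncomputable def FlatDimLE : ℕ → ModuleCat.{u} R → Prop
  | 0, K => IsFlatModule R K
  | m + 1, K => ∃ (P : ModuleCat.{u} R) (f : P →ₗ[R] K),
      IsFlatModule R P ∧ Function.Surjective f ∧
      FlatDimLE m (ModuleCat.of R (LinearMap.ker f))

/-- Finite flat dimension. -/
noncomputable def HasFiniteFlatDim (K : ModuleCat.{u} R) : Prop := ∃ m, FlatDimLE R m K

variable (𝒳 : Set (ModuleCat.{u} R)) (n : ℕ)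

/-- `Tor^R_k(N, U) = 0` for a right `R`-module `N` and a left `R`-module `U`, `k ≥ 1`:
by dimension shifting this says that for every `(k-1)`-st syzygy `K` of `U` and every
surjection `f : F → K` with `F` free, the induced map `N ⊗ ker f → N ⊗ F` is injective. -/
noncomputable def TorVanishes (k : ℕ) (N : ModuleCat.{u} Rᵐᵒᵖ) (U : ModuleCat.{u} R) : Prop :=
  ∀ (K : ModuleCat.{u} R), IsSyzygy R (k - 1) U K →
    ∀ (F : ModuleCat.{u} R) (f : F →ₗ[R] K), Module.Free R F → Function.Surjective f →
      Function.Injective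
        (rtmap R (LinearMap.id (M := N)) (LinearMap.ker f).subtype)

/-- `N` is an `n`-𝒳-flat right `R`-module: `Tor^R_n(N, U) = 0` for every
`n`-presented `U ∈ 𝒳`. -/
noncomputable def IsNXFlat (N : ModuleCat.{u} Rᵐᵒᵖ) : Prop :=
  ∀ U ∈ 𝒳, IsNPresented R n U → TorVanishes R n N U

/-- `N` has `n`-𝒳-flat dimension at most `m`:
`Tor^R_{n+i}(N, U) = 0` for all `i ≥ m + 1` and all `n`-presented `U ∈ 𝒳`. -/
noncomputable def NXFlatDimLE (m : ℕ) (N : ModuleCat.{u} Rᵐᵒᵖ) : Prop :=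
  ∀ U ∈ 𝒳, IsNPresented R n U → ∀ i : ℕ, m + 1 ≤ i → TorVanishes R (n + i) N U

/-- `N` has finite `n`-𝒳-flat dimension. -/
noncomputable def HasFiniteNXFlatDim (N : ModuleCat.{u} Rᵐᵒᵖ) : Prop := ∃ m, NXFlatDimLE R 𝒳 n m N

end Tensor

section Pure

variable (R : Type u) [Ring R] (𝒳 : Set (ModuleCat.{u} R)) (n : ℕ)

/-- A short exact sequence `0 → A → B → C → 0` of left `R`-modules (given by `i` and `p`)
is special 𝒳-pure if `0 → Hom(K, A) → Hom(K, B) → Hom(K, C) → 0` is exact for every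
special 𝒳-presented module `K`. -/
def IsSpecialXPure {A B C : Type u} [AddCommGroup A] [Module R A] [AddCommGroup B] [Module R B]
    [AddCommGroup C] [Module R C] (i : A →ₗ[R] B) (p : B →ₗ[R] C) : Prop :=
  ∀ K : ModuleCat.{u} R, IsSpecialPresented R 𝒳 n K →
    Function.Injective (fun g : K →ₗ[R] A => i.comp g) ∧
    Function.Exact (fun g : K →ₗ[R] A => i.comp g) (fun g : K →ₗ[R] B => p.comp g) ∧
    Function.Surjective (fun g : K →ₗ[R] B => p.comp g)

/-- A short exact sequence `0 → A → B → C → 0` of right `R`-modules (given by `i` and `p`)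
is special 𝒳-pure if `0 → A ⊗ K → B ⊗ K → C ⊗ K → 0` is exact for every special
𝒳-presented (left `R`-) module `K`. -/
noncomputable def IsSpecialXPureRight {A B C : Type u}
    [AddCommGroup A] [Module Rᵐᵒᵖ A] [AddCommGroup B] [Module Rᵐᵒᵖ B]
    [AddCommGroup C] [Module Rᵐᵒᵖ C] (i : A →ₗ[Rᵐᵒᵖ] B) (p : B →ₗ[Rᵐᵒᵖ] C) : Prop :=
  ∀ K : ModuleCat.{u} R, IsSpecialPresented R 𝒳 n K →
    Function.Injective (rtmap R i (LinearMap.id (M := K))) ∧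
    Function.Exact (rtmap R i (LinearMap.id (M := K))) (rtmap R p (LinearMap.id (M := K))) ∧
    Function.Surjective (rtmap R p (LinearMap.id (M := K)))

/-- `R` is self left `n`-𝒳-injective. -/
noncomputable def IsSelfNXInjective : Prop := IsNXInjective R 𝒳 n (ModuleCat.of R R)

end Pure

section Gorenstein

variable (R : Type u) [Ring R] (𝒳 : Set (ModuleCat.{u} R)) (n : ℕ)

/-- `G` is a Gorenstein `n`-𝒳-injective left `R`-module: there is an exact complex
`⋯ → A_1 → A_0 → A^0 → A^1 → ⋯` of `n`-𝒳-injective modules with `G = ker(A^0 → A^1)`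
which stays exact under `Hom_R(K, -)` for every special 𝒳-presented `K` of finite
projective dimension. -/
noncomputable def IsGorNXInjective (G : ModuleCat.{u} R) : Prop :=
  ∃ (C : ℤ → ModuleCat.{u} R) (d : ∀ i : ℤ, C i →ₗ[R] C (i - 1)),
    (∀ i, IsNXInjective R 𝒳 n (C i)) ∧
    (∀ i : ℤ, Function.Exact (d i) (d (i - 1))) ∧
    Nonempty (G ≃ₗ[R] LinearMap.ker (d 0)) ∧
    (∀ K : ModuleCat.{u} R, IsSpecialPresented R 𝒳 n K → HasFiniteProjDim R K →
      ∀ i : ℤ, Function.Exact (fun g : K →ₗ[R] C i => (d i).comp g)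
        (fun g : K →ₗ[R] C (i - 1) => (d (i - 1)).comp g))

/-- `G` is a Gorenstein `n`-𝒳-flat right `R`-module: there is an exact complex
`⋯ → F_1 → F_0 → F^0 → F^1 → ⋯` of `n`-𝒳-flat right modules with `G = ker(F^0 → F^1)`
which stays exact under `- ⊗_R K` for every special 𝒳-presented `K` of finite
flat dimension. -/
noncomputable def IsGorNXFlat (G : ModuleCat.{u} Rᵐᵒᵖ) : Prop :=
  ∃ (C : ℤ → ModuleCat.{u} Rᵐᵒᵖ) (d : ∀ i : ℤ, C i →ₗ[Rᵐᵒᵖ] C (i - 1)),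
    (∀ i, IsNXFlat R 𝒳 n (C i)) ∧
    (∀ i : ℤ, Function.Exact (d i) (d (i - 1))) ∧
    Nonempty (G ≃ₗ[Rᵐᵒᵖ] LinearMap.ker (d 0)) ∧
    (∀ K : ModuleCat.{u} R, IsSpecialPresented R 𝒳 n K → HasFiniteFlatDim R K →
      ∀ i : ℤ, Function.Exact (rtmap R (d i) (LinearMap.id (M := K)))
        (rtmap R (d (i - 1)) (LinearMap.id (M := K))))

end Gorenstein

section GorensteinAbsolute

/-- `G` is a Gorenstein injective module over `S`: there is an exact complex of injective
modules with `G = ker(E^0 → E^1)` which stays exact under `Hom(I, -)` for every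
injective module `I`. -/
noncomputable def IsGorensteinInjective (S : Type u) [Ring S] (G : ModuleCat.{u} S) : Prop :=
  ∃ (C : ℤ → ModuleCat.{u} S) (d : ∀ i : ℤ, C i →ₗ[S] C (i - 1)),
    (∀ i, Module.Injective S (C i)) ∧
    (∀ i : ℤ, Function.Exact (d i) (d (i - 1))) ∧
    Nonempty (G ≃ₗ[S] LinearMap.ker (d 0)) ∧
    (∀ I : ModuleCat.{u} S, Module.Injective S I →
      ∀ i : ℤ, Function.Exact (fun g : I →ₗ[S] C i => (d i).comp g)
        (fun g : I →ₗ[S] C (i - 1) => (d (i - 1)).comp g))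

/-- `G` is a Gorenstein projective module over `S`: there is an exact complex of projective
modules with `G = ker(P^0 → P^1)` which stays exact under `Hom(-, Q)` for every
projective module `Q`. -/
def IsGorensteinProjective (S : Type u) [Ring S] (G : ModuleCat.{u} S) : Prop :=
  ∃ (C : ℤ → ModuleCat.{u} S) (d : ∀ i : ℤ, C i →ₗ[S] C (i - 1)),
    (∀ i, Module.Projective S (C i)) ∧
    (∀ i : ℤ, Function.Exact (d i) (d (i - 1))) ∧
    Nonempty (G ≃ₗ[S] LinearMap.ker (d 0)) ∧
    (∀ Q : ModuleCat.{u} S, Module.Projective S Q →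
      ∀ i : ℤ, Function.Exact (fun g : C (i - 1 - 1) →ₗ[S] Q => g.comp (d (i - 1)))
        (fun g : C (i - 1) →ₗ[S] Q => g.comp (d i)))

variable (R : Type u) [Ring R]

/-- `G` is a Gorenstein flat left `R`-module: there is an exact complex of flat left modules
with `G = ker(F^0 → F^1)` which stays exact under `E ⊗_R -` for every injective right
`R`-module `E`. -/
noncomputable def IsGorensteinFlatLeft (G : ModuleCat.{u} R) : Prop :=
  ∃ (C : ℤ → ModuleCat.{u} R) (d : ∀ i : ℤ, C i →ₗ[R] C (i - 1)),
    (∀ i, IsFlatModule R (C i)) ∧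
    (∀ i : ℤ, Function.Exact (d i) (d (i - 1))) ∧
    Nonempty (G ≃ₗ[R] LinearMap.ker (d 0)) ∧
    (∀ E : ModuleCat.{u} Rᵐᵒᵖ, Module.Injective Rᵐᵒᵖ E →
      ∀ i : ℤ, Function.Exact (rtmap R (LinearMap.id (M := E)) (d i))
        (rtmap R (LinearMap.id (M := E)) (d (i - 1))))

/-- `G` is a Gorenstein flat right `R`-module: there is an exact complex of flat right modules
with `G = ker(F^0 → F^1)` which stays exact under `- ⊗_R E` for every injective left
`R`-module `E`. -/
noncomputable def IsGorensteinFlatRight (G : ModuleCat.{u} Rᵐᵒᵖ) : Prop :=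
  ∃ (C : ℤ → ModuleCat.{u} Rᵐᵒᵖ) (d : ∀ i : ℤ, C i →ₗ[Rᵐᵒᵖ] C (i - 1)),
    (∀ i, IsFlatRight R (C i)) ∧
    (∀ i : ℤ, Function.Exact (d i) (d (i - 1))) ∧
    Nonempty (G ≃ₗ[Rᵐᵒᵖ] LinearMap.ker (d 0)) ∧
    (∀ E : ModuleCat.{u} R, Module.Injective R E →
      ∀ i : ℤ, Function.Exact (rtmap R (d i) (LinearMap.id (M := E)))
        (rtmap R (d (i - 1)) (LinearMap.id (M := E))))

end GorensteinAbsolute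

/- The direct sum of the complexes witnessing Gorenstein `n`-𝒳-flatness of the `G i` witnesses it
for `⨁ G i`: exactness and kernels are computed componentwise in a direct sum, and `- ⊗_R K`
commutes with direct sums, so both the `Tor`-vanishing that defines `n`-𝒳-flatness and the
exactness of `𝐅 ⊗_R K` pass from the summands to the direct sum. -/

namespace DirectSum

variable {S ι : Type*} [Ring S] {M N P : ι → Type*}
  [∀ i, AddCommGroup (M i)] [∀ i, Module S (M i)]
  [∀ i, AddCommGroup (N i)] [∀ i, Module S (N i)]
  [∀ i, AddCommGroup (P i)] [∀ i, Module S (P i)]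

theorem lmap_exact {f : ∀ i, M i →ₗ[S] N i} {g : ∀ i, N i →ₗ[S] P i}
    (h : ∀ i, Function.Exact (f i) (g i)) : Function.Exact (lmap f) (lmap g) := by
  rw [LinearMap.exact_iff, ker_lmap, range_lmap]
  simp_rw [LinearMap.exact_iff.mp (h _)]

noncomputable def lequivKerLmap (g : ∀ i, N i →ₗ[S] P i) :
    (⨁ i, LinearMap.ker (g i)) ≃ₗ[S] LinearMap.ker (lmap g) :=
  have hexact := lmap_exact fun i => LinearMap.exact_subtype_ker_map (g i)
  (LinearEquiv.ofInjective _ ((lmap_injective _).mpr fun _ => Subtype.val_injective)).trans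
    (LinearEquiv.ofEq _ _ hexact.linearMap_ker_eq.symm)

end DirectSum

section RTensor

variable (R : Type u) [Ring R] {N N' U U' : Type u}
  [AddCommGroup N] [Module Rᵐᵒᵖ N] [AddCommGroup N'] [Module Rᵐᵒᵖ N']
  [AddCommGroup U] [Module R U] [AddCommGroup U'] [Module R U']

@[simp]
theorem rtmap_mk_tmul (g : N →ₗ[Rᵐᵒᵖ] N') (f : U →ₗ[R] U') (a : N) (v : U) :
    rtmap R g f (Submodule.Quotient.mk (a ⊗ₜ[ℤ] v)) = Submodule.Quotient.mk (g a ⊗ₜ[ℤ] f v) :=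
  rfl

@[ext]
theorem RTensor.ext {M : Type*} [AddCommMonoid M] [Module ℤ M] {F F' : RTensor R N U →ₗ[ℤ] M}
    (h : ∀ a v, F (Submodule.Quotient.mk (a ⊗ₜ[ℤ] v)) = F' (Submodule.Quotient.mk (a ⊗ₜ[ℤ] v))) :
    F = F' := by
  refine LinearMap.ext fun x => Submodule.Quotient.induction_on _ x fun z => ?_
  induction z using TensorProduct.induction_on with
  | zero => simp only [Submodule.Quotient.mk_zero, map_zero]
  | tmul a v => exact h a v
  | add z z' hz hz' => simp only [Submodule.Quotient.mk_add, map_add, hz, hz']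

noncomputable def rtLift {M : Type*} [AddCommGroup M] [Module ℤ M] (φ : TensorProduct ℤ N U →+ M)
    (hφ : ∀ (r : R) a v, φ ((MulOpposite.op r • a) ⊗ₜ[ℤ] v) = φ (a ⊗ₜ[ℤ] (r • v))) :
    RTensor R N U →ₗ[ℤ] M :=
  (tensorRel R N U).liftQ
    -- built by hand rather than by `AddMonoidHom.toIntLinearMap`, so that `M` may carry any
    -- `ℤ`-module structure, such as that of a direct sum
    { toFun := φ
      map_add' := map_add φ
      map_smul' := fun c x => (map_zsmul φ c x).trans (int_smul_eq_zsmul _ c (φ x)).symm } (by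
    rw [tensorRel, Submodule.span_le]
    rintro _ ⟨r, a, v, rfl⟩
    simp [hφ])

@[simp]
theorem rtLift_mk {M : Type*} [AddCommGroup M] [Module ℤ M] (φ : TensorProduct ℤ N U →+ M)
    (hφ : ∀ (r : R) a v, φ ((MulOpposite.op r • a) ⊗ₜ[ℤ] v) = φ (a ⊗ₜ[ℤ] (r • v)))
    (x : TensorProduct ℤ N U) : rtLift R φ hφ (Submodule.Quotient.mk x) = φ x :=
  rfl

end RTensor

section RTensorDirectSum

open TensorProduct

theorem TensorProduct.directSumLeft_lof_tmul {S ι : Type*} [Semiring S] [DecidableEq ι]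
    (M : ι → Type*) [∀ i, AddCommGroup (M i)] [∀ i, Module S (M i)] (P : Type*) [AddCommGroup P]
    (i : ι) (x : M i) (y : P) :
    directSumLeft ℤ ℤ M P (lof S ι M i x ⊗ₜ[ℤ] y) = lof ℤ ι (fun i => M i ⊗[ℤ] P) i (x ⊗ₜ[ℤ] y) :=
  directSumLeft_tmul_lof ℤ ℤ i x y

variable (R : Type u) [Ring R] {J : Type u} [DecidableEq J]
  (N : J → Type u) [∀ j, AddCommGroup (N j)] [∀ j, Module Rᵐᵒᵖ (N j)]
  (U : Type u) [AddCommGroup U] [Module R U]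

noncomputable def rtensorToDirectSum : RTensor R (⨁ j, N j) U →ₗ[ℤ] ⨁ j, RTensor R (N j) U :=
  rtLift R (M := ⨁ j, RTensor R (N j) U)
    ((DirectSum.map fun j => (tensorRel R (N j) U).mkQ.toAddMonoidHom).comp
      (directSumLeft ℤ ℤ N U).toAddMonoidHom) fun r m v => by
    refine DFinsupp.ext fun j => ?_
    simp only [AddMonoidHom.coe_comp, Function.comp_apply, map_apply,
      LinearMap.toAddMonoidHom_coe, LinearEquiv.coe_coe, directSumLeft_tmul, DirectSum.smul_apply]
    exact (Submodule.Quotient.eq _).mpr (Submodule.subset_span ⟨r, m j, v, rfl⟩)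

theorem rtensorToDirectSum_mk_lof_tmul (j : J) (a : N j) (v : U) :
    rtensorToDirectSum R N U (Submodule.Quotient.mk (lof Rᵐᵒᵖ J N j a ⊗ₜ[ℤ] v)) =
      lof ℤ J (fun j => RTensor R (N j) U) j (Submodule.Quotient.mk (a ⊗ₜ[ℤ] v)) := by
  rw [rtensorToDirectSum, rtLift_mk, AddMonoidHom.comp_apply, LinearMap.toAddMonoidHom_coe,
    LinearEquiv.coe_coe, directSumLeft_lof_tmul]
  exact DirectSum.map_of _ _ _

noncomputable def rtensorDirectSum : RTensor R (⨁ j, N j) U ≃ₗ[ℤ] ⨁ j, RTensor R (N j) U :=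
  LinearEquiv.ofLinearMap (rtensorToDirectSum R N U)
    (toModule ℤ J _ fun j => rtmap R (lof Rᵐᵒᵖ J N j) LinearMap.id)
    (DirectSum.linearMap_ext ℤ fun j => RTensor.ext R fun a v => by
      simp only [LinearMap.comp_apply, toModule_lof, rtmap_mk_tmul, LinearMap.id_apply,
        rtensorToDirectSum_mk_lof_tmul])
    (RTensor.ext R fun m v => by
      induction m using DirectSum.induction_on with
      | zero => simp only [zero_tmul, Submodule.Quotient.mk_zero, map_zero]
      | of j a =>
        rw [← lof_eq_of Rᵐᵒᵖ, LinearMap.comp_apply, rtensorToDirectSum_mk_lof_tmul, toModule_lof,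
          rtmap_mk_tmul, LinearMap.id_apply, LinearMap.id_apply]
      | add m m' hm hm' =>
        simp only [add_tmul, Submodule.Quotient.mk_add, map_add, hm, hm'])

theorem rtensorDirectSum_mk_tmul_apply (m : ⨁ j, N j) (v : U) (j : J) :
    rtensorDirectSum R N U (Submodule.Quotient.mk (m ⊗ₜ[ℤ] v)) j =
      Submodule.Quotient.mk (m j ⊗ₜ[ℤ] v) := by
  simp only [rtensorDirectSum, LinearEquiv.coe_ofLinearMap, rtensorToDirectSum, rtLift_mk,
    AddMonoidHom.coe_comp, Function.comp_apply, map_apply, LinearMap.toAddMonoidHom_coe,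
    LinearEquiv.coe_coe, directSumLeft_tmul]
  rfl

variable {R N U} {N' : J → Type u} [∀ j, AddCommGroup (N' j)] [∀ j, Module Rᵐᵒᵖ (N' j)]
  {U' : Type u} [AddCommGroup U'] [Module R U']

theorem lmap_rtmap_comp_rtensorDirectSum (g : ∀ j, N j →ₗ[Rᵐᵒᵖ] N' j) (f : U →ₗ[R] U') :
    lmap (fun j => rtmap R (g j) f) ∘ₗ (rtensorDirectSum R N U).toLinearMap =
      (rtensorDirectSum R N' U').toLinearMap ∘ₗ rtmap R (lmap g) f :=
  RTensor.ext R fun m v => DFinsupp.ext fun j => by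
    simp only [LinearMap.comp_apply, LinearEquiv.coe_coe, lmap_apply, rtmap_mk_tmul,
      rtensorDirectSum_mk_tmul_apply]

end RTensorDirectSum

section DirectSumTransfer

variable {R : Type u} [Ring R] {J : Type u}
  {N N' N'' : J → Type u} [∀ j, AddCommGroup (N j)] [∀ j, Module Rᵐᵒᵖ (N j)]
  [∀ j, AddCommGroup (N' j)] [∀ j, Module Rᵐᵒᵖ (N' j)]
  [∀ j, AddCommGroup (N'' j)] [∀ j, Module Rᵐᵒᵖ (N'' j)]
  {U U' U'' : Type u} [AddCommGroup U] [Module R U] [AddCommGroup U'] [Module R U']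
  [AddCommGroup U''] [Module R U'']

theorem rtmap_lmap_injective {g : ∀ j, N j →ₗ[Rᵐᵒᵖ] N' j} {f : U →ₗ[R] U'}
    (h : ∀ j, Function.Injective (rtmap R (g j) f)) : Function.Injective (rtmap R (lmap g) f) := by
  classical
  rw [← (rtensorDirectSum R N' U').injective.of_comp_iff, ← LinearEquiv.coe_coe,
    ← LinearMap.coe_comp, ← lmap_rtmap_comp_rtensorDirectSum, LinearMap.coe_comp]
  exact ((lmap_injective _).mpr h).comp (rtensorDirectSum R N U).injective

theorem rtmap_lmap_exact {g : ∀ j, N j →ₗ[Rᵐᵒᵖ] N' j} {g' : ∀ j, N' j →ₗ[Rᵐᵒᵖ] N'' j}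
    {f : U →ₗ[R] U'} {f' : U' →ₗ[R] U''}
    (h : ∀ j, Function.Exact (rtmap R (g j) f) (rtmap R (g' j) f')) :
    Function.Exact (rtmap R (lmap g) f) (rtmap R (lmap g') f') := by
  classical
  exact (Function.Exact.iff_of_ladder_linearEquiv (lmap_rtmap_comp_rtensorDirectSum g f)
    (lmap_rtmap_comp_rtensorDirectSum g' f')).mp (lmap_exact h)

end DirectSumTransfer

theorem TorVanishes.directSum {R : Type u} [Ring R] {J : Type u} {k : ℕ}
    {N : J → ModuleCat.{u} Rᵐᵒᵖ} {U : ModuleCat.{u} R} (h : ∀ j, TorVanishes R k (N j) U) :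
    TorVanishes R k (ModuleCat.of Rᵐᵒᵖ (⨁ j, N j)) U := by
  intro K hK F f hF hf
  have := rtmap_lmap_injective fun j => h j K hK F f hF hf
  rwa [lmap_id] at this

theorem IsNXFlat.directSum {R : Type u} [Ring R] {𝒳 : Set (ModuleCat.{u} R)} {n : ℕ} {J : Type u}
    {N : J → ModuleCat.{u} Rᵐᵒᵖ} (h : ∀ j, IsNXFlat R 𝒳 n (N j)) :
    IsNXFlat R 𝒳 n (ModuleCat.of Rᵐᵒᵖ (⨁ j, N j)) :=
  fun U hU hUn => TorVanishes.directSum fun j => h j U hU hUn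

theorem statement_11_general (R : Type u) [Ring R] (𝒳 : Set (ModuleCat.{u} R)) (n : ℕ)
    (J : Type u) (G : J → ModuleCat.{u} Rᵐᵒᵖ)
    (hG : ∀ i, IsGorNXFlat R 𝒳 n (G i)) :
    IsGorNXFlat R 𝒳 n (ModuleCat.of Rᵐᵒᵖ (⨁ i, ↥(G i))) := by
  choose C d hflat hexact hker hpure using hG
  exact ⟨fun i => ModuleCat.of Rᵐᵒᵖ (⨁ j, C j i), fun i => lmap fun j => d j i,
    fun i => IsNXFlat.directSum fun j => hflat j i,
    fun i => lmap_exact fun j => hexact j i,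
    ⟨(DFinsupp.mapRange.linearEquiv fun j => (hker j).some).trans (lequivKerLmap _)⟩,
    fun K hK hfin i => rtmap_lmap_exact fun j => hpure j K hK hfin i⟩

/-- any direct sum of Gorenstein `n`-𝒳-flat right `R`-modules is Gorenstein
`n`-𝒳-flat. -/
theorem statement_11 (R : Type u) [Ring R] (𝒳 : Set (ModuleCat.{u} R)) (n : ℕ) (hn : 1 ≤ n)
    (J : Type u) (G : J → ModuleCat.{u} Rᵐᵒᵖ)
    (hG : ∀ i, IsGorNXFlat R 𝒳 n (G i)) :
    IsGorNXFlat R 𝒳 n (ModuleCat.of Rᵐᵒᵖ (⨁ i, ↥(G i))) :=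
  statement_11_general R 𝒳 n J G hG
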